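/- Suppose there exists x ∈ Λ_V with ε_i(x) = c for some vertex i ∈ I and c ∈ ℕ. Let V' be the I-graded vector space with V'_j = V_j for j ≠ i and V'_i = V_i ⊕ ℂ. Then there exists x' ∈ Λ_{V'} with ε_i(x') = c + 1. (This is the fact that nonemptiness of Λ(v)_{i,c} implies nonemptiness of Λ(v + e^i)_{i,c+1}.) -/
import Mathlib


/-!
STATEMENT 14: If there exists x ∈ Λ_V with ε_i(x) = c, and V' is the I-graded
vector space obtained from V by replacing V_i by V_i ⊕ ℂ, then there exists
x' ∈ Λ_{V'} with ε_i(x') = c + 1.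
-/

noncomputable section

/-- Transport a graded vector along an equality of indices. -/
def castLM {I : Type*} (V : I → Type*) [∀ i, AddCommGroup (V i)] [∀ i, Module ℂ (V i)]
    {i j : I} (hij : i = j) : V i →ₗ[ℂ] V j := by
  subst hij; exact LinearMap.id

/-- The sign function ε associated to an orientation Ω. -/
def epsSign {H : Type*} (Ω : Set H) [DecidablePred (· ∈ Ω)] (h : H) : ℂ :=
  if h ∈ Ω then 1 else -1

/-- The i-th component of the moment map:
ψ_i(x) = Σ_{h ∈ H, inc(h)=i} ε(h) · x_h ∘ x_{h̄} ∈ End(V_i). -/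
def psiMap {I H : Type*} [DecidableEq I] [Fintype H] (out inc : H → I) (bar : H → H)
    (hout : ∀ h, out (bar h) = inc h) (hinc : ∀ h, inc (bar h) = out h)
    (Ω : Set H) [DecidablePred (· ∈ Ω)]
    (V : I → Type*) [∀ i, AddCommGroup (V i)] [∀ i, Module ℂ (V i)]
    (x : ∀ h, V (out h) →ₗ[ℂ] V (inc h)) (i : I) : V i →ₗ[ℂ] V i :=
  ∑ h : H,
    if hh : inc h = i then
      epsSign Ω h • (castLM V hh ∘ₗ
        (x h ∘ₗ castLM V (hinc h) ∘ₗ x (bar h) ∘ₗ castLM V (hout h).symm) ∘ₗ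
        castLM V hh.symm)
    else 0

/-- The endomorphism of Π_i V_i induced by the component x_h of x ∈ E_V. -/
def hatMap {I H : Type*} [DecidableEq I] (out inc : H → I)
    (V : I → Type*) [∀ i, AddCommGroup (V i)] [∀ i, Module ℂ (V i)]
    (x : ∀ h, V (out h) →ₗ[ℂ] V (inc h)) (h : H) :
    (∀ i, V i) →ₗ[ℂ] (∀ i, V i) :=
  LinearMap.pi fun j =>
    if hj : inc h = j then castLM V hj ∘ₗ x h ∘ₗ LinearMap.proj (out h) else 0

/-- x ∈ E_V is nilpotent. -/
def IsNilpotentE {I H : Type*} [DecidableEq I] (out inc : H → I)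
    (V : I → Type*) [∀ i, AddCommGroup (V i)] [∀ i, Module ℂ (V i)]
    (x : ∀ h, V (out h) →ₗ[ℂ] V (inc h)) : Prop :=
  ∃ N : ℕ, 1 ≤ N ∧ ∀ hs : List H, hs.length = N →
    hs.Chain' (fun h h' => out h = inc h') →
    ((hs.map (hatMap out inc V x)).prod : Module.End ℂ (∀ i, V i)) = 0

/-- ε_i(x) = dim Coker(⊕_{h : inc(h) = i} V_{out(h)} → V_i), the map sending
(v_h)_h to Σ_h x_h(v_h). -/
def epsVertex {I H : Type*} [DecidableEq I] [Fintype H] (out inc : H → I)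
    (V : I → Type*) [∀ i, AddCommGroup (V i)] [∀ i, Module ℂ (V i)]
    (x : ∀ h, V (out h) →ₗ[ℂ] V (inc h)) (i : I) : ℕ :=
  Module.finrank ℂ
    (V i ⧸ LinearMap.range
      (∑ h : {h : H // inc h = i},
        castLM V h.2 ∘ₗ x h.1 ∘ₗ
          LinearMap.proj (φ := fun h' : {h : H // inc h = i} => V (out h'.1)) h))

lemma castLM_refl' {I : Type*} (V : I → Type*) [∀ i, AddCommGroup (V i)] [∀ i, Module ℂ (V i)]
    {a : I} (e : a = a) : castLM V e = LinearMap.id := rfl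

lemma castLM_natural {I : Type*} (V V' : I → Type*)
    [∀ i, AddCommGroup (V i)] [∀ i, Module ℂ (V i)]
    [∀ i, AddCommGroup (V' i)] [∀ i, Module ℂ (V' i)]
    (f : ∀ j, V j →ₗ[ℂ] V' j) {a b : I} (e : a = b) (v : V a) :
    castLM V' e (f a v) = f b (castLM V e v) := by subst e; rfl

lemma listProdConj {M M' : Type*} [AddCommGroup M] [Module ℂ M]
    [AddCommGroup M'] [Module ℂ M']
    (Φ : M →ₗ[ℂ] M') (Ψ : M' →ₗ[ℂ] M) (hΨΦ : ∀ v, Ψ (Φ v) = v)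
    (l : List (Module.End ℂ M)) (hl : l ≠ []) :
    ((l.map (fun m => Φ ∘ₗ m ∘ₗ Ψ)).prod : Module.End ℂ M')
      = Φ ∘ₗ (l.prod : Module.End ℂ M) ∘ₗ Ψ := by
  induction l with
  | nil => exact absurd rfl hl
  | cons a t ih =>
    cases t with
    | nil => simp
    | cons b s =>
      rw [List.map_cons, List.prod_cons, List.prod_cons, ih (by simp)]
      ext v
      simp [Module.End.mul_apply, hΨΦ]

theorem stmt14 {I H : Type*} [Fintype I] [DecidableEq I] [Fintype H]
    (out inc : H → I) (bar : H → H)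
    (hinvol : ∀ h, bar (bar h) = h) (hfpf : ∀ h, bar h ≠ h)
    (hout : ∀ h, out (bar h) = inc h) (hinc : ∀ h, inc (bar h) = out h)
    (hnoloop : ∀ h, out h ≠ inc h)
    (Ω : Set H) [DecidablePred (· ∈ Ω)]
    (hcover : ∀ h, h ∈ Ω ∨ bar h ∈ Ω) (hdisj : ∀ h, ¬(h ∈ Ω ∧ bar h ∈ Ω))
    (V : I → Type*) [∀ i, AddCommGroup (V i)] [∀ i, Module ℂ (V i)]
    [∀ i, FiniteDimensional ℂ (V i)]
    (i : I) (c : ℕ)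
    -- there exists x ∈ Λ_V with ε_i(x) = c
    (x : ∀ h, V (out h) →ₗ[ℂ] V (inc h))
    (hxnil : IsNilpotentE out inc V x)
    (hxpsi : ∀ j, psiMap out inc bar hout hinc Ω V x j = 0)
    (hxeps : epsVertex out inc V x i = c)
    -- V' is an I-graded space with V'_j = V_j for j ≠ i and V'_i = V_i ⊕ ℂ
    (V' : I → Type*) [∀ j, AddCommGroup (V' j)] [∀ j, Module ℂ (V' j)]
    [∀ j, FiniteDimensional ℂ (V' j)]
    (hdim : ∀ j, j ≠ i → Module.finrank ℂ (V' j) = Module.finrank ℂ (V j))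
    (hdimi : Module.finrank ℂ (V' i) = Module.finrank ℂ (V i) + 1) :
    -- then there exists x' ∈ Λ_{V'} with ε_i(x') = c + 1
    ∃ x' : ∀ h, V' (out h) →ₗ[ℂ] V' (inc h),
      IsNilpotentE out inc V' x' ∧
      (∀ j, psiMap out inc bar hout hinc Ω V' x' j = 0) ∧
      epsVertex out inc V' x' i = c + 1 := by
  classical
  -- construct section/retraction pairs
  have hιπ : ∀ j, ∃ a : V j →ₗ[ℂ] V' j, ∃ b : V' j →ₗ[ℂ] V j,
      ∀ v, b (a v) = v := by
    intro j
    by_cases hj : j = i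
    · subst hj
      have hfr : Module.finrank ℂ (V j × ℂ) = Module.finrank ℂ (V' j) := by
        simp [hdimi]
      let e : (V j × ℂ) ≃ₗ[ℂ] V' j := LinearEquiv.ofFinrankEq _ _ hfr
      refine ⟨e.toLinearMap ∘ₗ LinearMap.inl ℂ (V j) ℂ,
        LinearMap.fst ℂ (V j) ℂ ∘ₗ e.symm.toLinearMap, fun v => by simp⟩
    · let e : V j ≃ₗ[ℂ] V' j := LinearEquiv.ofFinrankEq _ _ (hdim j hj).symm
      exact ⟨e.toLinearMap, e.symm.toLinearMap, fun v => by simp⟩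
  choose ι π hπι using hιπ
  set x' : ∀ h, V' (out h) →ₗ[ℂ] V' (inc h) :=
    fun h => ι (inc h) ∘ₗ x h ∘ₗ π (out h) with hx'
  refine ⟨x', ?_, ?_, ?_⟩
  · -- nilpotency
    obtain ⟨N, hN1, hN⟩ := hxnil
    refine ⟨N, hN1, fun hs hlen hchain => ?_⟩
    set Φ : (∀ j, V j) →ₗ[ℂ] (∀ j, V' j) :=
      LinearMap.pi fun j => ι j ∘ₗ LinearMap.proj j with hΦ
    set Ψ : (∀ j, V' j) →ₗ[ℂ] (∀ j, V j) :=
      LinearMap.pi fun j => π j ∘ₗ LinearMap.proj j with hΨ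
    have hΨΦ : ∀ v, Ψ (Φ v) = v := by
      intro v; funext j; simp [hΦ, hΨ, hπι]
    have hhat : ∀ h, hatMap out inc V' x' h = Φ ∘ₗ hatMap out inc V x h ∘ₗ Ψ := by
      intro h
      apply LinearMap.ext; intro v
      funext j
      simp only [hatMap, LinearMap.pi_apply, LinearMap.comp_apply, hΦ, hΨ,
        LinearMap.proj_apply]
      by_cases hj : inc h = j
      · subst hj
        simp only [dif_pos rfl, castLM_refl', LinearMap.id_comp,
          LinearMap.comp_apply, LinearMap.proj_apply, LinearMap.pi_apply, hx']
        simp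
      · simp [dif_neg hj]
    have hmap : hs.map (hatMap out inc V' x')
        = (hs.map (hatMap out inc V x)).map (fun m => Φ ∘ₗ m ∘ₗ Ψ) := by
      rw [List.map_map]
      exact List.map_congr_left fun h _ => hhat h
    have hne : hs.map (hatMap out inc V x) ≠ [] := by
      intro hemp
      have := congrArg List.length hemp
      simp [hlen] at this
      omega
    rw [hmap, listProdConj Φ Ψ hΨΦ _ hne, hN hs hlen hchain]
    ext v
    simp
  · -- moment map
    intro j
    have key : psiMap out inc bar hout hinc Ω V' x' j
        = ι j ∘ₗ psiMap out inc bar hout hinc Ω V x j ∘ₗ π j := by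
      apply LinearMap.ext; intro v
      simp only [psiMap, LinearMap.sum_apply, LinearMap.comp_apply]
      rw [map_sum]
      refine Finset.sum_congr rfl fun h _ => ?_
      by_cases hh : inc h = j
      · subst hh
        simp only [dif_pos rfl, castLM_refl', LinearMap.smul_apply,
          LinearMap.comp_apply, LinearMap.id_apply, hx', map_smul]
        simp only [dite_true, LinearMap.id_comp, LinearMap.comp_id,
          LinearMap.smul_apply, LinearMap.comp_apply, map_smul]
        rw [castLM_natural V V' ι (hinc h), hπι,
          castLM_natural V' V π ((hout h).symm)]
      · simp [dif_neg hh]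
    rw [key, hxpsi j]
    ext v
    simp
  · -- epsVertex
    set Ψ' : (∀ h' : {h : H // inc h = i}, V' (out h'.1)) →ₗ[ℂ]
        (∀ h' : {h : H // inc h = i}, V (out h'.1)) :=
      LinearMap.pi fun h' => π (out h'.1) ∘ₗ
        LinearMap.proj (φ := fun h' : {h : H // inc h = i} => V' (out h'.1)) h' with hΨ'
    set M : (∀ h' : {h : H // inc h = i}, V (out h'.1)) →ₗ[ℂ] V i :=
      ∑ h : {h : H // inc h = i},
        castLM V h.2 ∘ₗ x h.1 ∘ₗ
          LinearMap.proj (φ := fun h' : {h : H // inc h = i} => V (out h'.1)) h with hM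
    set M' : (∀ h' : {h : H // inc h = i}, V' (out h'.1)) →ₗ[ℂ] V' i :=
      ∑ h : {h : H // inc h = i},
        castLM V' h.2 ∘ₗ x' h.1 ∘ₗ
          LinearMap.proj (φ := fun h' : {h : H // inc h = i} => V' (out h'.1)) h with hM'
    have key : M' = ι i ∘ₗ M ∘ₗ Ψ' := by
      apply LinearMap.ext; intro v
      simp only [hM, hM', LinearMap.sum_apply, LinearMap.comp_apply]
      rw [map_sum]
      refine Finset.sum_congr rfl fun h _ => ?_
      simp only [LinearMap.comp_apply, LinearMap.proj_apply, hx', hΨ',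
        LinearMap.pi_apply]
      rw [castLM_natural V V' ι h.2]
    have hΨ'surj : LinearMap.range Ψ' = ⊤ := by
      rw [LinearMap.range_eq_top]
      intro w
      refine ⟨fun h' => ι (out h'.1) (w h'), ?_⟩
      funext h'
      simp [hΨ', hπι]
    have hrange : LinearMap.range M' = Submodule.map (ι i) (LinearMap.range M) := by
      rw [key, LinearMap.range_comp,
        LinearMap.range_comp_of_range_eq_top _ hΨ'surj]
    have hinj : Function.Injective (ι i) := Function.LeftInverse.injective (hπι i)
    have e3 : Module.finrank ℂ (Submodule.map (ι i) (LinearMap.range M))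
        = Module.finrank ℂ (LinearMap.range M) :=
      ((Submodule.equivMapOfInjective (ι i) hinj (LinearMap.range M)).finrank_eq).symm
    have e1 := Submodule.finrank_quotient_add_finrank (LinearMap.range M)
    have e2 := Submodule.finrank_quotient_add_finrank
      (Submodule.map (ι i) (LinearMap.range M))
    unfold epsVertex at hxeps ⊢
    rw [← hM'] at *
    rw [hrange]
    rw [← hM] at hxeps
    omega

end
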